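/- arXiv:2510.24713 — 3 statements merged into one kernel-verified Lean document; each statement's English description precedes it below -/
import Mathlib

section
/- Let N ≥ 2, let X ⊊ {1,…,N} be a proper subset, and let g be a linear operator on the N-qubit Hilbert space supported on X (i.e., g = g_X ⊗ Id_{X^c} for some operator g_X on H_X). If g|W⟩ = λ|W⟩ for some λ ∈ ℂ, then g|0̄⟩ = λ|0̄⟩ (equivalently g_X|0̄⟩_X = λ|0̄⟩_X) and moreover g_X|W⟩_X = λ|W⟩_X. -/
open scoped BigOperators

noncomputable section

/-- Configurations of `N` qubits. -/
abbrev Cfg (N : ℕ) := Fin N → Fin 2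

/-- The `N`-qubit Hilbert space `⊗_{j=1}^N ℂ²`, identified with `ℂ^(Fin N → Fin 2)`. -/
abbrev QS (N : ℕ) := EuclideanSpace ℂ (Cfg N)

/-- Computational basis state `|t⟩`. -/
def ket {N : ℕ} (t : Cfg N) : QS N := EuclideanSpace.single t 1

/-- Configuration with a single `1` at site `j`. -/
def eConf {N : ℕ} (j : Fin N) : Cfg N := fun k => if k = j then 1 else 0

/-- The all-zero product state `|0̄⟩`. -/
def zeroKet (N : ℕ) : QS N := ket (fun _ => 0)

/-- The W state `|W⟩ = (1/√N) ∑_j |e_j⟩`. -/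
def Wst (N : ℕ) : QS N := (Real.sqrt N : ℂ)⁻¹ • ∑ j : Fin N, ket (eConf j)

/-- Hilbert space of the qubits in a subregion `A ⊆ {1,…,N}`. -/
abbrev QSOn {N : ℕ} (A : Finset (Fin N)) := EuclideanSpace ℂ (↥A → Fin 2)

/-- Computational basis state on subregion `A`. -/
def ketOn {N : ℕ} (A : Finset (Fin N)) (t : ↥A → Fin 2) : QSOn A := EuclideanSpace.single t 1

/-- All-zero state `|0̄⟩_A` on subregion `A`. -/
def zeroOn {N : ℕ} (A : Finset (Fin N)) : QSOn A := ketOn A (fun _ => 0)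

/-- W state `|W⟩_A = (1/√|A|) ∑_{j∈A} |e_j⟩_A` on subregion `A`. -/
def WOn {N : ℕ} (A : Finset (Fin N)) : QSOn A :=
  (Real.sqrt A.card : ℂ)⁻¹ • ∑ j : ↥A, ketOn A (fun k => if k = j then 1 else 0)

/-- Tensor product of a state on `X` with a state on `Xᶜ`, realized in the full `N`-qubit
space via the factorization of basis configurations. -/
def tens {N : ℕ} (X : Finset (Fin N)) (f : QSOn X) (g : QSOn Xᶜ) : QS N :=
  WithLp.toLp 2 (fun s => f (fun j => s j.1) * g (fun j => s j.1))

/-- Combine a configuration on `X` and one on `Xᶜ` into a full configuration. -/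
def mergeCfg {N : ℕ} (X : Finset (Fin N)) (x : ↥X → Fin 2) (y : ↥(Xᶜ) → Fin 2) : Cfg N :=
  fun k => if h : k ∈ X then x ⟨k, h⟩ else y ⟨k, Finset.mem_compl.mpr h⟩

/-! Since `g = gX ⊗ Id`, contracting the `Xᶜ` factor with a basis bra `⟨y|` intertwines `g` with
`gX`, so `g ψ = λ ψ` exactly when every such slice of `ψ` is a `λ`-eigenvector of `gX`. The slices
of `|W⟩` at `y = e_j` with `j ∉ X` and at `y = 0̄` are nonzero multiples of `|0̄⟩_X` and of
`√|X| |W⟩_X`, and every slice of `|0̄⟩` is `0` or `|0̄⟩_X`. -/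

open Module.End

variable {N : ℕ} {X : Finset (Fin N)}

lemma mergeCfg_eq_iff {x : ↥X → Fin 2} {y : ↥Xᶜ → Fin 2} {s : Cfg N} :
    mergeCfg X x y = s ↔ x = X.restrict s ∧ y = Xᶜ.restrict s := by
  constructor
  · rintro rfl
    constructor <;> funext ⟨k, hk⟩
    · simp [mergeCfg, Finset.restrict, hk]
    · simp [mergeCfg, Finset.restrict, Finset.mem_compl.mp hk]
  · rintro ⟨rfl, rfl⟩
    funext k
    by_cases hk : k ∈ X <;> simp [mergeCfg, Finset.restrict, hk]

lemma mergeCfg_restrict (s : Cfg N) : mergeCfg X (X.restrict s) (Xᶜ.restrict s) = s :=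
  mergeCfg_eq_iff.mpr ⟨rfl, rfl⟩

variable (X) in
/-- `slice X y ψ` is the partial inner product `(Id_X ⊗ ⟨y|) ψ` with the basis state `|y⟩` of
`Xᶜ`. -/
def slice (y : ↥Xᶜ → Fin 2) : QS N →ₗ[ℂ] QSOn X where
  toFun ψ := WithLp.toLp 2 fun x => ψ (mergeCfg X x y)
  map_add' _ _ := rfl
  map_smul' _ _ := rfl

lemma slice_apply (y : ↥Xᶜ → Fin 2) (ψ : QS N) (x : ↥X → Fin 2) :
    slice X y ψ x = ψ (mergeCfg X x y) := rfl

lemma eq_of_forall_slice_eq {φ ψ : QS N} (h : ∀ y, slice X y φ = slice X y ψ) : φ = ψ := by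
  ext s
  simpa [slice_apply, mergeCfg_restrict] using congrArg (· (X.restrict s)) (h (Xᶜ.restrict s))

lemma slice_ket (y : ↥Xᶜ → Fin 2) (s : Cfg N) :
    slice X y (ket s) = if Xᶜ.restrict s = y then ketOn X (X.restrict s) else 0 := by
  ext x
  split_ifs with hy
  · subst hy
    simp [slice_apply, ket, ketOn, mergeCfg_eq_iff]
  · simp [slice_apply, ket, mergeCfg_eq_iff, Ne.symm hy]

section Supported

variable {g : QS N →ₗ[ℂ] QS N} {gX : QSOn X →ₗ[ℂ] QSOn X}

lemma slice_map_of_supported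
    (hsupp : ∀ ψ s, g ψ s = gX (slice X (Xᶜ.restrict s) ψ) (X.restrict s))
    (y : ↥Xᶜ → Fin 2) (ψ : QS N) : slice X y (g ψ) = gX (slice X y ψ) := by
  ext x
  obtain ⟨hx, hy⟩ := mergeCfg_eq_iff.mp (rfl : mergeCfg X x y = _)
  rw [slice_apply, hsupp, ← hx, ← hy]

lemma apply_eq_smul_iff_forall_slice_mem_eigenspace
    (hsupp : ∀ ψ s, g ψ s = gX (slice X (Xᶜ.restrict s) ψ) (X.restrict s))
    (lam : ℂ) (ψ : QS N) :
    g ψ = lam • ψ ↔ ∀ y, slice X y ψ ∈ eigenspace gX lam := by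
  simp only [mem_eigenspace_iff, ← slice_map_of_supported hsupp, ← map_smul]
  exact ⟨fun h y => h ▸ rfl, eq_of_forall_slice_eq⟩

end Supported

lemma restrict_eConf_eq_zero_iff {A : Finset (Fin N)} {j : Fin N} :
    A.restrict (eConf j) = (fun _ => 0) ↔ j ∉ A := by
  constructor
  · intro h hj
    simpa [Finset.restrict, eConf] using congrFun h ⟨j, hj⟩
  · intro hj
    funext k
    have : (k : Fin N) ≠ j := fun h => hj (h ▸ k.2)
    simp [Finset.restrict, eConf, this]

lemma restrict_eConf_inj {A : Finset (Fin N)} {i j : Fin N} (hj : j ∈ A) :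
    A.restrict (eConf i) = A.restrict (eConf j) ↔ i = j := by
  constructor
  · intro h
    by_contra hij
    simpa [Finset.restrict, eConf, Ne.symm hij] using congrFun h ⟨j, hj⟩
  · rintro rfl
    rfl

lemma slice_Wst (y : ↥Xᶜ → Fin 2) :
    slice X y (Wst N) = (Real.sqrt N : ℂ)⁻¹ •
      ∑ j, if Xᶜ.restrict (eConf j) = y then ketOn X (X.restrict (eConf j)) else 0 := by
  simp only [Wst, map_smul, map_sum, slice_ket]

lemma slice_Wst_zero :
    slice X (fun _ => 0) (Wst N) = (Real.sqrt N : ℂ)⁻¹ •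
      ∑ j : ↥X, ketOn X (fun k => if k = j then 1 else 0) := by
  rw [slice_Wst]
  congr 1
  simp only [restrict_eConf_eq_zero_iff, Finset.mem_compl, not_not]
  rw [← Finset.sum_filter, Finset.filter_mem_eq_inter, Finset.univ_inter, ← Finset.sum_coe_sort]
  congr! 3 with j - k
  simp only [Finset.restrict, eConf, Subtype.ext_iff]

lemma slice_Wst_of_not_mem {j : Fin N} (hj : j ∉ X) :
    slice X (Xᶜ.restrict (eConf j)) (Wst N) = (Real.sqrt N : ℂ)⁻¹ • zeroOn X := by
  rw [slice_Wst]
  simp only [restrict_eConf_inj (Finset.mem_compl.mpr hj), Finset.sum_ite_eq', Finset.mem_univ,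
    if_true, restrict_eConf_eq_zero_iff.mpr hj, zeroOn]

lemma slice_zeroKet (y : ↥Xᶜ → Fin 2) :
    slice X y (zeroKet N) = if y = (fun _ => 0) then zeroOn X else 0 := by
  simp only [zeroKet, slice_ket, eq_comm]
  rfl

theorem supported_eigenoperator_of_W_general (N : ℕ)
    (X : Finset (Fin N)) (hproper : X ⊂ Finset.univ)
    (g : QS N →ₗ[ℂ] QS N) (gX : QSOn X →ₗ[ℂ] QSOn X)
    (hsupp : ∀ (ψ : QS N) (s : Cfg N),
      g ψ s
        = gX (WithLp.toLp 2 (fun x : ↥X → Fin 2 => ψ (mergeCfg X x (fun j : ↥(Xᶜ) => s j.1))))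
            (fun j : ↥X => s j.1))
    (lam : ℂ) (hW : g (Wst N) = lam • Wst N) :
    g (zeroKet N) = lam • zeroKet N
      ∧ gX (zeroOn X) = lam • zeroOn X
      ∧ gX (WOn X) = lam • WOn X := by
  have hslice := apply_eq_smul_iff_forall_slice_mem_eigenspace hsupp lam
  have hWslice := (hslice _).mp hW
  obtain ⟨j, -, hj⟩ := Finset.exists_of_ssubset hproper
  have hN : (Real.sqrt N : ℂ)⁻¹ ≠ 0 := by simpa using j.pos.ne'
  have hzero : zeroOn X ∈ eigenspace gX lam := by
    simpa [slice_Wst_of_not_mem hj, Submodule.smul_mem_iff _ hN] using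
      hWslice (Xᶜ.restrict (eConf j))
  -- `WOn X` is by definition a multiple of this sum
  have hsum : ∑ i : ↥X, ketOn X (fun k => if k = i then 1 else 0) ∈ eigenspace gX lam := by
    simpa [slice_Wst_zero, Submodule.smul_mem_iff _ hN] using hWslice fun _ => 0
  refine ⟨(hslice _).mpr fun y => ?_, mem_eigenspace_iff.mp hzero,
    mem_eigenspace_iff.mp (Submodule.smul_mem _ _ hsum)⟩
  rw [slice_zeroKet]
  split_ifs
  exacts [hzero, zero_mem _]

/-- If a linear operator `g = gX ⊗ Id_{Xᶜ}` supported on a proper subset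
`X ⊊ {1,…,N}` satisfies `g|W⟩ = λ|W⟩`, then `g|0̄⟩ = λ|0̄⟩` (equivalently
`gX |0̄⟩_X = λ|0̄⟩_X`) and moreover `gX |W⟩_X = λ|W⟩_X`. -/
theorem supported_eigenoperator_of_W (N : ℕ) (hN : 2 ≤ N)
    (X : Finset (Fin N)) (hproper : X ⊂ Finset.univ)
    (g : QS N →ₗ[ℂ] QS N) (gX : QSOn X →ₗ[ℂ] QSOn X)
    (hsupp : ∀ (ψ : QS N) (s : Cfg N),
      g ψ s
        = gX (WithLp.toLp 2 (fun x : ↥X → Fin 2 => ψ (mergeCfg X x (fun j : ↥(Xᶜ) => s j.1))))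
            (fun j : ↥X => s j.1))
    (lam : ℂ) (hW : g (Wst N) = lam • Wst N) :
    g (zeroKet N) = lam • zeroKet N
      ∧ gX (zeroOn X) = lam • zeroOn X
      ∧ gX (WOn X) = lam • WOn X :=
  supported_eigenoperator_of_W_general N X hproper g gX hsupp lam hW

end
end

section
/- Let N ≥ 2 and let X ⊆ {1,…,N} with 2 ≤ |X| < N. Let h be an operator supported on X with h|0̄⟩_X = 0 and h|W⟩_X = 0 (acting on the region X). Then |⟨W²| h |W²⟩| ≤ ‖h‖ · C(|X|,2)/C(N,2), where |W²⟩ is the two-particle Dicke state on N qubits. -/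
open scoped BigOperators

noncomputable section

/-- Two-particle Dicke state `|W²⟩ = (1/√C(N,2)) ∑_{j<k} s_j† s_k† |0̄⟩`. -/
def W2 (N : ℕ) : QS N :=
  (Real.sqrt (N.choose 2) : ℂ)⁻¹ •
    ∑ p ∈ Finset.univ.filter (fun p : Fin N × Fin N => p.1 < p.2),
      ket (fun k => if k = p.1 ∨ k = p.2 then 1 else 0)

/-! The slices of a state `ψ` along `X` are the vectors `ψ_y ∈ ℂ^(X → Fin 2)`, one for each
configuration `y` of the qubits outside `X`, and an operator supported on `X` acts on each slice by
`hX`. The slice of `|W²⟩` at `y` is a multiple of the unnormalised Dicke vector of weight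
`2 - |y|` on `X`, so for `y ≠ 0` it lies in the span of `|0̄⟩_X` and `|W⟩_X` and is killed by
`hX`. Hence `⟨W²|h|W²⟩ = ⟨v|h|v⟩` for `v = u ⊗ |0̄⟩_{Xᶜ}`, `u` the slice at `y = 0`, and
Cauchy–Schwarz gives the bound, since `‖v‖² = ‖u‖² = C(|X|,2)/C(N,2)`. -/

open Finset

theorem sum_filter_lt_pair_eq_sum_powersetCard_two {ι M : Type*} [Fintype ι] [LinearOrder ι]
    [AddCommMonoid M] (f : Finset ι → M) :
    ∑ p ∈ univ.filter (fun p : ι × ι => p.1 < p.2), f {p.1, p.2} =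
      ∑ T ∈ powersetCard 2 univ, f T := by
  refine sum_bij (fun p _ => {p.1, p.2}) ?_ ?_ ?_ (fun _ _ => rfl)
  · rintro ⟨a, b⟩ hab
    simp only [mem_filter, mem_univ, true_and] at hab
    simpa using card_pair hab.ne
  · rintro ⟨a, b⟩ hab ⟨c, d⟩ hcd h
    simp only [mem_filter, mem_univ, true_and] at hab hcd
    have h' := congrArg ((↑) : Finset ι → Set ι) h
    push_cast at h'
    rcases Set.pair_eq_pair_iff.1 h' with ⟨rfl, rfl⟩ | ⟨rfl, rfl⟩
    · rfl
    · exact absurd (hab.trans hcd) (lt_irrefl _)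
  · intro T hT
    obtain ⟨a, b, hab, rfl⟩ := card_eq_two.1 (mem_powersetCard.1 hT).2
    rcases hab.lt_or_gt with h | h
    · exact ⟨(a, b), by simpa using h, rfl⟩
    · exact ⟨(b, a), by simpa using h, pair_comm _ _⟩

section Dicke

variable {ι : Type*} [Fintype ι] [DecidableEq ι]

def cfgEquivFinset : (ι → Fin 2) ≃ Finset ι where
  toFun x := {i | x i ≠ 0}
  invFun T i := if i ∈ T then 1 else 0
  left_inv x := by
    funext i
    by_cases hi : x i = 0 <;> simp [hi, Fin.eq_one_of_ne_zero]
  right_inv T := by ext; simp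

variable (ι) in
def dicke (k : ℕ) : EuclideanSpace ℂ (ι → Fin 2) :=
  WithLp.toLp 2 fun x => if hammingNorm x = k then 1 else 0

theorem sum_single_powersetCard_eq_dicke (k : ℕ) :
    ∑ T ∈ powersetCard k univ, EuclideanSpace.single (cfgEquivFinset.symm T) (1 : ℂ) =
      dicke ι k := by
  ext x
  simp only [WithLp.ofLp_sum, Finset.sum_apply, PiLp.single_apply, Equiv.eq_symm_apply,
    sum_ite_eq, mem_powersetCard, subset_univ, true_and]
  rfl

theorem norm_dicke_sq (k : ℕ) : ‖dicke ι k‖ ^ 2 = (Fintype.card ι).choose k := by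
  rw [EuclideanSpace.norm_sq_eq, ← card_univ, ← card_powersetCard, powersetCard_eq_filter,
    powerset_univ, card_filter, ← cfgEquivFinset.sum_comp]
  simp only [dicke, apply_ite, norm_one, norm_zero, ite_pow, one_pow, ne_eq, OfNat.ofNat_ne_zero,
    not_false_eq_true, zero_pow, sum_boole, Nat.cast_id, Nat.cast_inj]
  rfl

end Dicke

theorem W2_eq_smul_dicke (N : ℕ) : W2 N = (Real.sqrt (N.choose 2) : ℂ)⁻¹ • dicke (Fin N) 2 := by
  rw [W2, ← sum_single_powersetCard_eq_dicke, ← sum_filter_lt_pair_eq_sum_powersetCard_two]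
  congr 1
  refine sum_congr rfl fun p _ => ?_
  congr 1
  funext k
  simp [cfgEquivFinset]

theorem sqrt_card_smul_WOn {N : ℕ} (A : Finset (Fin N)) :
    (Real.sqrt A.card : ℂ) • WOn A = dicke A 1 := by
  rcases eq_or_ne A.card 0 with hA | hA
  · ext x
    have := hA ▸ (hammingNorm_le_card_fintype (x := x)).trans_eq (Fintype.card_coe A)
    simp only [hA, CharP.cast_eq_zero, Real.sqrt_zero, Complex.ofReal_zero, zero_smul,
      PiLp.zero_apply, dicke, right_eq_ite_iff, zero_ne_one, imp_false]
    omega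
  · rw [WOn, smul_smul, mul_inv_cancel₀ (by simpa using hA), one_smul,
      ← sum_single_powersetCard_eq_dicke, powersetCard_one, sum_map]
    refine sum_congr rfl fun j _ => ?_
    congr 1
    funext k
    simp [cfgEquivFinset]

theorem zeroOn_eq_dicke {N : ℕ} (A : Finset (Fin N)) : zeroOn A = dicke A 0 := by
  ext x
  simp only [zeroOn, ketOn, PiLp.single_apply, dicke, hammingNorm_eq_zero]
  rfl

section Slice

variable {N : ℕ} (X : Finset (Fin N))

@[simp]
theorem mergeCfg_coe (x : ↥X → Fin 2) (y : ↥Xᶜ → Fin 2) (j : ↥X) : mergeCfg X x y j = x j := by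
  simp [mergeCfg]

@[simp]
theorem mergeCfg_coe_compl (x : ↥X → Fin 2) (y : ↥Xᶜ → Fin 2) (j : ↥Xᶜ) :
    mergeCfg X x y j = y j := by
  simp [mergeCfg, mem_compl.1 j.2]

def mergeCfgEquiv : (↥X → Fin 2) × (↥Xᶜ → Fin 2) ≃ Cfg N where
  toFun p := mergeCfg X p.1 p.2
  invFun s := (fun j => s j, fun j => s j)
  left_inv p := by simp
  right_inv s := by funext k; by_cases hk : k ∈ X <;> simp [mergeCfg, hk]

theorem sum_cfg_eq_sum_mergeCfg {M : Type*} [AddCommMonoid M] (f : Cfg N → M) :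
    ∑ s, f s = ∑ x, ∑ y, f (mergeCfg X x y) := by
  rw [← (mergeCfgEquiv X).sum_comp, Fintype.sum_prod_type]
  rfl

theorem hammingNorm_mergeCfg (x : ↥X → Fin 2) (y : ↥Xᶜ → Fin 2) :
    hammingNorm (mergeCfg X x y) = hammingNorm x + hammingNorm y := by
  simp only [hammingNorm, card_filter]
  rw [← sum_add_sum_compl X, ← sum_coe_sort X, ← sum_coe_sort Xᶜ]
  simp

/-- `sliceAt X ψ y` is `(Id_X ⊗ ⟨y|) ψ`. -/
def sliceAt (ψ : QS N) (y : ↥Xᶜ → Fin 2) : QSOn X := WithLp.toLp 2 fun x => ψ (mergeCfg X x y)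

theorem inner_eq_sum_inner_sliceAt (ψ φ : QS N) :
    inner ℂ ψ φ = ∑ y, inner ℂ (sliceAt X ψ y) (sliceAt X φ y) := by
  simp only [PiLp.inner_apply, sliceAt]
  rw [sum_cfg_eq_sum_mergeCfg X, sum_comm]

theorem sliceAt_smul (a : ℂ) (ψ : QS N) (y : ↥Xᶜ → Fin 2) :
    sliceAt X (a • ψ) y = a • sliceAt X ψ y := rfl

theorem sliceAt_dicke (k : ℕ) (y : ↥Xᶜ → Fin 2) :
    sliceAt X (dicke (Fin N) k) y =
      if hammingNorm y ≤ k then dicke X (k - hammingNorm y) else 0 := by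
  ext x
  by_cases hy : hammingNorm y ≤ k
  · simp only [sliceAt, dicke, hammingNorm_mergeCfg, if_pos hy]
    congr 1
    exact propext (by omega)
  · simp only [sliceAt, dicke, hammingNorm_mergeCfg, if_neg hy, PiLp.zero_apply, ite_eq_right_iff]
    omega

theorem sliceAt_tens (f : QSOn X) (g : QSOn Xᶜ) (y : ↥Xᶜ → Fin 2) :
    sliceAt X (tens X f g) y = g y • f := by
  ext x
  simp [sliceAt, tens, mul_comm]

theorem sliceAt_tens_zeroOn (f : QSOn X) (y : ↥Xᶜ → Fin 2) :
    sliceAt X (tens X f (zeroOn Xᶜ)) y = if y = 0 then f else 0 := by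
  rw [sliceAt_tens, zeroOn_eq_dicke]
  split_ifs with hy <;> simp [dicke, hammingNorm_eq_zero, hy]

theorem norm_tens_sq (f : QSOn X) (g : QSOn Xᶜ) : ‖tens X f g‖ ^ 2 = ‖f‖ ^ 2 * ‖g‖ ^ 2 := by
  simp only [EuclideanSpace.norm_sq_eq, sum_mul_sum, sum_cfg_eq_sum_mergeCfg X, tens]
  simp [mul_pow]

theorem norm_sliceAt_W2_zero_sq :
    ‖sliceAt X (W2 N) 0‖ ^ 2 = (X.card.choose 2 : ℝ) / (N.choose 2 : ℝ) := by
  rw [W2_eq_smul_dicke, sliceAt_smul, sliceAt_dicke, norm_smul, mul_pow]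
  simp [norm_dicke_sq, div_eq_inv_mul]

/-- `h = hX ⊗ Id_{Xᶜ}`. -/
def IsSupportedOn (h : QS N →L[ℂ] QS N) (hX : QSOn X →L[ℂ] QSOn X) : Prop :=
  ∀ (ψ : QS N) (s : Cfg N), h ψ s = hX (sliceAt X ψ (fun j => s j)) (fun j => s j)

end Slice

section Supported

variable {N : ℕ} {X : Finset (Fin N)} {h : QS N →L[ℂ] QS N} {hX : QSOn X →L[ℂ] QSOn X}

theorem IsSupportedOn.sliceAt_map (hsupp : IsSupportedOn X h hX) (ψ : QS N)
    (y : ↥Xᶜ → Fin 2) : sliceAt X (h ψ) y = hX (sliceAt X ψ y) := by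
  ext x
  exact (hsupp ψ _).trans (by simp)

theorem IsSupportedOn.inner_map_self_eq (hsupp : IsSupportedOn X h hX) {ψ : QS N}
    (hψ : ∀ y, y ≠ 0 → hX (sliceAt X ψ y) = 0) :
    inner ℂ ψ (h ψ) = inner ℂ (sliceAt X ψ 0) (hX (sliceAt X ψ 0)) := by
  simp only [inner_eq_sum_inner_sliceAt X, hsupp.sliceAt_map]
  exact sum_eq_single 0 (fun y _ hy => by rw [hψ y hy, inner_zero_right]) (by simp)

theorem map_dicke_eq_zero (h0 : hX (zeroOn X) = 0) (hW : hX (WOn X) = 0) {k : ℕ} (hk : k ≤ 1) :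
    hX (dicke X k) = 0 := by
  interval_cases k
  · rwa [← zeroOn_eq_dicke]
  · rw [← sqrt_card_smul_WOn, map_smul, hW, smul_zero]

theorem map_sliceAt_W2_eq_zero (h0 : hX (zeroOn X) = 0) (hW : hX (WOn X) = 0)
    {y : ↥Xᶜ → Fin 2} (hy : y ≠ 0) : hX (sliceAt X (W2 N) y) = 0 := by
  have : 1 ≤ hammingNorm y := hammingNorm_pos_iff.2 hy
  rw [W2_eq_smul_dicke, sliceAt_smul, map_smul, sliceAt_dicke]
  split_ifs
  · rw [map_dicke_eq_zero h0 hW (by omega), smul_zero]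
  · rw [map_zero, smul_zero]

end Supported

theorem W2_expectation_bound_general (N : ℕ) (X : Finset (Fin N))
    (h : QS N →L[ℂ] QS N) (hX : QSOn X →L[ℂ] QSOn X)
    (hsupp : ∀ (ψ : QS N) (s : Cfg N),
      h ψ s
        = hX (WithLp.toLp 2 (fun x : ↥X → Fin 2 => ψ (mergeCfg X x (fun j : ↥(Xᶜ) => s j.1))))
            (fun j : ↥X => s j.1))
    (h0 : hX (zeroOn X) = 0) (hW : hX (WOn X) = 0) :
    ‖(inner ℂ (W2 N) (h (W2 N)) : ℂ)‖ ≤ ‖h‖ * ((X.card.choose 2 : ℝ) / (N.choose 2 : ℝ)) := by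
  replace hsupp : IsSupportedOn X h hX := hsupp
  set v := tens X (sliceAt X (W2 N) 0) (zeroOn Xᶜ)
  have hvW2 : inner ℂ (W2 N) (h (W2 N)) = inner ℂ v (h v) := by
    rw [hsupp.inner_map_self_eq fun y hy => map_sliceAt_W2_eq_zero h0 hW hy,
      hsupp.inner_map_self_eq fun y hy => by simp [v, sliceAt_tens_zeroOn, hy]]
    simp [v, sliceAt_tens_zeroOn]
  have hv : ‖v‖ ^ 2 = (X.card.choose 2 : ℝ) / (N.choose 2 : ℝ) := by
    rw [norm_tens_sq, zeroOn_eq_dicke, norm_dicke_sq, Nat.choose_zero_right, Nat.cast_one, mul_one,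
      norm_sliceAt_W2_zero_sq]
  rw [hvW2]
  calc ‖(inner ℂ v (h v) : ℂ)‖ ≤ ‖v‖ * (‖h‖ * ‖v‖) :=
        (norm_inner_le_norm _ _).trans (by gcongr; exact h.le_opNorm v)
    _ = ‖h‖ * ((X.card.choose 2 : ℝ) / (N.choose 2 : ℝ)) := by rw [← hv]; ring

/-- Let `X` with `2 ≤ |X| < N`, and let `h = hX ⊗ Id_{Xᶜ}` be supported on
`X` with `hX |0̄⟩_X = 0` and `hX |W⟩_X = 0`. Then
`|⟨W²| h |W²⟩| ≤ ‖h‖ · C(|X|,2)/C(N,2)`. -/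
theorem W2_expectation_bound (N : ℕ) (hN : 2 ≤ N) (X : Finset (Fin N))
    (hXcard : 2 ≤ X.card) (hXlt : X.card < N)
    (h : QS N →L[ℂ] QS N) (hX : QSOn X →L[ℂ] QSOn X)
    (hsupp : ∀ (ψ : QS N) (s : Cfg N),
      h ψ s
        = hX (WithLp.toLp 2 (fun x : ↥X → Fin 2 => ψ (mergeCfg X x (fun j : ↥(Xᶜ) => s j.1))))
            (fun j : ↥X => s j.1))
    (h0 : hX (zeroOn X) = 0) (hW : hX (WOn X) = 0) :
    ‖(inner ℂ (W2 N) (h (W2 N)) : ℂ)‖ ≤ ‖h‖ * ((X.card.choose 2 : ℝ) / (N.choose 2 : ℝ)) :=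
  W2_expectation_bound_general N X h hX hsupp h0 hW

end
end

section
/- Let N ≥ 2 and let c be a purely imaginary Hermitian N×N hopping matrix (c_{jk} = i a_{jk} with a real antisymmetric) indexed cyclically, with all row sums zero: Σ_k c_{jk} = 0 for all j. For 2 ≤ α, define Q^{j,α} := i(E_{j,j+α} − E_{j+α,j}) − i Σ_{n=1}^{α} (E_{j+n−1,j+n} − E_{j+n,j+n−1}) (indices mod N), each of which is Hermitian with all row sums zero and annihilates the all-ones vector. Then there exists t ∈ ℝ and real coefficients such that c = t·A_NN + Σ_{j,α≥2} c^{(α)}_j Q^{j,α}, where A_NN := (i/2)Σ_{j} (E_{j,j+1} − E_{j+1,j})·2 = i Σ_j (E_{j,j+1} − E_{j+1,j}) is the nearest-neighbor pure-imaginary cyclic hopping matrix. In particular, the quotient of the space of such matrices by the span of {Q^{j,α}} is at most one-dimensional, spanned by A_NN. -/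
open Matrix
open scoped BigOperators

noncomputable section

/-- Matrix unit `E_{ab}` over `ℂ`. -/
def stdC {N : ℕ} (a b : Fin N) : Matrix (Fin N) (Fin N) ℂ := single a b 1

open Fin.NatCast in
/-- The Hermitian zero-row-sum hopping matrices
`Q^{j,α} = i(E_{j,j+α} − E_{j+α,j}) − i ∑_{n=1}^α (E_{j+n−1,j+n} − E_{j+n,j+n−1})`
(indices mod `N`). -/
def Qmat (N : ℕ) [NeZero N] (j : Fin N) (α : ℕ) : Matrix (Fin N) (Fin N) ℂ :=
  Complex.I • (stdC j (j + (α : Fin N)) - stdC (j + (α : Fin N)) j)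
    - Complex.I •
        ∑ n ∈ Finset.Icc 1 α,
          (stdC (j + ((n - 1 : ℕ) : Fin N)) (j + ((n : ℕ) : Fin N))
            - stdC (j + ((n : ℕ) : Fin N)) (j + ((n - 1 : ℕ) : Fin N)))

/-- The nearest-neighbor pure-imaginary cyclic hopping matrix
`A_NN = i ∑_j (E_{j,j+1} − E_{j+1,j})`. -/
def Ann (N : ℕ) [NeZero N] : Matrix (Fin N) (Fin N) ℂ :=
  Complex.I • ∑ j : Fin N, (stdC j (j + 1) - stdC (j + 1) j)

/-!
Write `c = i a` with `a` real antisymmetric, so that `c` is a real combination of the bonds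
`i (E_{pq} - E_{qp})`. The bond from `j` to `j + α` is `Q^{j,α}` plus the nearest-neighbour bonds
along the path `j, j + 1, …, j + α`, so `c` is a combination of the `Q^{j,α}` plus a remainder
`∑ r_p i (E_{p,p+1} - E_{p+1,p})`. The `Q^{j,α}` annihilate the all-ones vector, hence so does
the remainder; its row sum at `p` is `i (r_p - r_{p-1})`, so `r` is constant around the cycle
and the remainder is `r • A_NN`.
-/

open Fin.NatCast

lemma Finset.sum_Icc_one_eq_sum_range {M : Type*} [AddCommMonoid M] (f : ℕ → M) (a : ℕ) :
    ∑ n ∈ Finset.Icc 1 a, f n = ∑ k ∈ Finset.range a, f (k + 1) := by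
  rw [Finset.range_eq_Ico, Finset.sum_Ico_add', zero_add, Finset.Ico_add_one_right_eq_Icc]

lemma Finset.sum_range_eq_sum_Icc_two {M : Type*} [AddCommMonoid M] {f : ℕ → M} {n : ℕ}
    (hn : n ≠ 0) (h0 : f 0 = 0) (h1 : f 1 = 0) (hfn : f n = 0) :
    ∑ α ∈ Finset.range n, f α = ∑ α ∈ Finset.Icc 2 n, f α := by
  rw [← add_zero (∑ α ∈ Finset.range n, f α), ← hfn, ← Finset.sum_range_succ,
    ← Finset.sum_range_add_sum_Ico _ (by omega : 2 ≤ n + 1), Finset.Ico_add_one_right_eq_Icc]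
  simp [Finset.sum_range_succ, h0, h1]

lemma Matrix.mulVec_one_apply {m n R : Type*} [Fintype n] [NonAssocSemiring R]
    (M : Matrix m n R) (i : m) : (M *ᵥ 1) i = ∑ l, M i l := by
  simp [mulVec, dotProduct]

lemma Fin.sum_univ_eq_sum_range_add {M : Type*} [AddCommMonoid M] {N : ℕ} [NeZero N]
    (j : Fin N) (g : Fin N → M) : ∑ q, g q = ∑ α ∈ Finset.range N, g (j + α) := by
  rw [← Fin.sum_univ_eq_sum_range (fun α => g (j + α))]
  simp only [Fin.cast_val_eq_self]
  exact (Equiv.sum_comp (Equiv.addLeft j) g).symm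

lemma Fin.apply_eq_apply_of_forall_eq_sub_one {α : Type*} {N : ℕ} [NeZero N] {f : Fin N → α}
    (h : ∀ i, f i = f (i - 1)) (i j : Fin N) : f i = f j := by
  have h0 : ∀ k : ℕ, f k = f 0 := by
    intro k
    induction k with
    | zero => simp
    | succ k ih => rw [h, Nat.cast_succ, add_sub_cancel_right, ih]
  rw [← Fin.cast_val_eq_self i, ← Fin.cast_val_eq_self j, h0, h0]

section Bond

variable {N : ℕ}

def bond (p q : Fin N) : Matrix (Fin N) (Fin N) ℂ := Complex.I • (stdC p q - stdC q p)

lemma bond_apply (p q i l : Fin N) :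
    bond p q i l =
      Complex.I * ((if p = i ∧ q = l then 1 else 0) - if q = i ∧ p = l then 1 else 0) := by
  simp [bond, stdC, single_apply]

@[simp] lemma bond_self (p : Fin N) : bond p p = 0 := by
  simp [bond]

lemma isHermitian_bond (p q : Fin N) : (bond p q).IsHermitian := by
  rw [IsHermitian, bond, conjTranspose_smul, conjTranspose_sub, stdC, stdC, conjTranspose_single,
    conjTranspose_single, star_one, Complex.star_def, Complex.conj_I, neg_smul, ← smul_neg, neg_sub]

lemma bond_mulVec_one (p q : Fin N) :
    bond p q *ᵥ 1 = Complex.I • (Pi.single p 1 - Pi.single q 1) := by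
  simp [bond, stdC, sub_mulVec, smul_mulVec, single_mulVec, Pi.single]

-- Each unordered pair `{p, q}` is counted twice, as `(p, q)` and as `(q, p)`.
lemma eq_sum_smul_bond {c : Matrix (Fin N) (Fin N) ℂ} (hherm : c.IsHermitian)
    (him : ∀ j k, (c j k).re = 0) :
    c = ∑ p, ∑ q, (((c p q).im / 2 : ℝ) : ℂ) • bond p q := by
  ext i l
  have hanti : (c l i).im = -(c i l).im := by
    rw [← hherm.apply i l, Complex.star_def, Complex.conj_im, neg_neg]
  simp only [Matrix.sum_apply, Matrix.smul_apply, bond_apply, ite_and, mul_sub, mul_ite, mul_one,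
    mul_zero, smul_eq_mul, Finset.sum_sub_distrib, Finset.sum_ite_irrel, Finset.sum_ite_eq',
    Finset.mem_univ, if_true, Finset.sum_const_zero, hanti]
  conv_lhs => rw [← Complex.re_add_im (c i l), him i l]
  push_cast
  ring

end Bond

section Qmat

variable {N : ℕ} [NeZero N]

lemma Qmat_eq_bond_sub_sum (j : Fin N) (α : ℕ) :
    Qmat N j α =
      bond j (j + α) - ∑ k ∈ Finset.range α, bond (j + (k : Fin N)) (j + (k : Fin N) + 1) := by
  rw [Qmat, Finset.smul_sum, Finset.sum_Icc_one_eq_sum_range]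
  simp only [Nat.add_sub_cancel, Nat.cast_succ, add_assoc]
  rfl

lemma isHermitian_Qmat (j : Fin N) (α : ℕ) : (Qmat N j α).IsHermitian := by
  rw [Qmat_eq_bond_sub_sum, isHermitian_iff_isSelfAdjoint]
  exact (isHermitian_bond _ _).sub (isSelfAdjoint_sum _ fun _ _ => isHermitian_bond _ _)

lemma Qmat_mulVec_one (j : Fin N) (α : ℕ) : Qmat N j α *ᵥ 1 = 0 := by
  have telescope :=
    Finset.sum_range_sub' (fun k : ℕ => (Pi.single (j + (k : Fin N)) 1 : Fin N → ℂ)) α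
  simp only [Qmat_eq_bond_sub_sum, sub_mulVec, sum_mulVec, bond_mulVec_one, ← Finset.smul_sum,
    Nat.cast_succ, ← add_assoc] at telescope ⊢
  simp [telescope]

lemma Qmat_zero (j : Fin N) : Qmat N j 0 = 0 := by
  simp [Qmat_eq_bond_sub_sum]

lemma Qmat_one (j : Fin N) : Qmat N j 1 = 0 := by
  simp [Qmat_eq_bond_sub_sum]

lemma Ann_eq_sum_bond : Ann N = ∑ p, bond p (p + 1) := by
  rw [Ann, Finset.smul_sum]
  rfl

end Qmat

section Decomposition

def nearestNeighborSpan (N : ℕ) [NeZero N] : Submodule ℝ (Matrix (Fin N) (Fin N) ℂ) :=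
  Submodule.span ℝ (Set.range fun p : Fin N => bond p (p + 1))

variable {N : ℕ} [NeZero N]

lemma sum_bond_mem_nearestNeighborSpan (j : Fin N) (α : ℕ) :
    ∑ k ∈ Finset.range α, bond (j + (k : Fin N)) (j + (k : Fin N) + 1) ∈ nearestNeighborSpan N :=
  Submodule.sum_mem _ fun _ _ => Submodule.subset_span ⟨_, rfl⟩

lemma sum_smul_bond_add_one_mulVec_one (r : Fin N → ℝ) (i : Fin N) :
    ((∑ p, r p • bond p (p + 1)) *ᵥ 1) i = Complex.I * (r i - r (i - 1)) := by
  simp only [sum_mulVec, smul_mulVec, bond_mulVec_one, Finset.sum_apply, Pi.smul_apply,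
    Pi.sub_apply, Pi.single_apply, smul_eq_mul, Complex.real_smul]
  have hshift : ∀ p : Fin N, (i = p + 1) ↔ (p = i - 1) := fun p => by
    rw [eq_sub_iff_add_eq, eq_comm]
  simp only [hshift, mul_sub, mul_ite, mul_one, mul_zero, Finset.sum_sub_distrib,
    Finset.sum_ite_eq, Finset.sum_ite_eq', Finset.mem_univ, if_true]
  ring

lemma exists_eq_smul_Ann_of_mem_nearestNeighborSpan {R : Matrix (Fin N) (Fin N) ℂ}
    (hR : R ∈ nearestNeighborSpan N) (hrow : R *ᵥ 1 = 0) : ∃ t : ℝ, R = (t : ℂ) • Ann N := by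
  obtain ⟨r, rfl⟩ := (Submodule.mem_span_range_iff_exists_fun ℝ).mp hR
  have hr : ∀ i, r i = r (i - 1) := by
    intro i
    have := congrFun hrow i
    rw [sum_smul_bond_add_one_mulVec_one] at this
    simpa [sub_eq_zero] using this
  refine ⟨r 0, ?_⟩
  rw [Ann_eq_sum_bond, Finset.smul_sum]
  simp_rw [Complex.coe_smul]
  exact Finset.sum_congr rfl fun p _ => by rw [Fin.apply_eq_apply_of_forall_eq_sub_one hr p 0]

lemma exists_eq_sum_smul_Qmat_add_mem_nearestNeighborSpan {c : Matrix (Fin N) (Fin N) ℂ}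
    (hherm : c.IsHermitian) (him : ∀ j k, (c j k).re = 0) :
    ∃ R ∈ nearestNeighborSpan N, c = ∑ j : Fin N, ∑ α ∈ Finset.Icc 2 N,
      (((c j (j + (α : Fin N))).im / 2 : ℝ) : ℂ) • Qmat N j α + R := by
  set x : Fin N → ℕ → ℂ := fun j α => (((c j (j + (α : Fin N))).im / 2 : ℝ) : ℂ) with hx
  refine ⟨∑ j, ∑ α ∈ Finset.range N,
    x j α • ∑ k ∈ Finset.range α, bond (j + (k : Fin N)) (j + (k : Fin N) + 1), ?_, ?_⟩
  · refine Submodule.sum_mem _ fun j _ => Submodule.sum_mem _ fun α _ => ?_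
    rw [hx, Complex.coe_smul]
    exact Submodule.smul_mem _ _ (sum_bond_mem_nearestNeighborSpan j α)
  have hdiag : ∀ j, x j N = 0 := fun j => by
    simp [hx, Complex.conj_eq_iff_im.mp (hherm.apply j j)]
  calc c = ∑ j, ∑ α ∈ Finset.range N, x j α • bond j (j + α) := by
        rw [eq_sum_smul_bond hherm him]
        exact Finset.sum_congr rfl fun j _ => Fin.sum_univ_eq_sum_range_add j _
    _ = ∑ j, ∑ α ∈ Finset.range N, x j α • Qmat N j α + ∑ j, ∑ α ∈ Finset.range N,
          x j α • ∑ k ∈ Finset.range α, bond (j + (k : Fin N)) (j + (k : Fin N) + 1) := by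
        simp only [Qmat_eq_bond_sub_sum, smul_sub, ← Finset.sum_add_distrib, sub_add_cancel]
    _ = _ := by
        congr 1
        refine Finset.sum_congr rfl fun j _ =>
          Finset.sum_range_eq_sum_Icc_two (NeZero.ne N) ?_ ?_ ?_
        · rw [Qmat_zero, smul_zero]
        · rw [Qmat_one, smul_zero]
        · rw [hdiag, zero_smul]

end Decomposition

theorem imaginary_hopping_decomposition_general (N : ℕ) [NeZero N]
    (c : Matrix (Fin N) (Fin N) ℂ)
    (hherm : c.IsHermitian) (him : ∀ j k, (c j k).re = 0)
    (hrow : ∀ j, ∑ k, c j k = 0) :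
    (∀ (j : Fin N) (α : ℕ), 2 ≤ α →
        (Qmat N j α).IsHermitian
          ∧ (∀ i, ∑ l, Qmat N j α i l = 0)
          ∧ Qmat N j α *ᵥ (fun _ => (1 : ℂ)) = 0)
      ∧ ∃ (t : ℝ) (coef : Fin N → ℕ → ℝ),
          c = (t : ℂ) • Ann N
              + ∑ j : Fin N, ∑ α ∈ Finset.Icc 2 N, (coef j α : ℂ) • Qmat N j α := by
  refine ⟨fun j α _ => ⟨isHermitian_Qmat j α, fun i => ?_, Qmat_mulVec_one j α⟩, ?_⟩
  · rw [← mulVec_one_apply, Qmat_mulVec_one, Pi.zero_apply]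
  have hc1 : c *ᵥ 1 = 0 := funext fun i => (mulVec_one_apply c i).trans (hrow i)
  obtain ⟨R, hR, hc⟩ := exists_eq_sum_smul_Qmat_add_mem_nearestNeighborSpan hherm him
  have hRrow : R *ᵥ 1 = 0 := by
    rw [eq_sub_of_add_eq' hc.symm, sub_mulVec, hc1, sum_mulVec]
    simp [sum_mulVec, smul_mulVec, Qmat_mulVec_one]
  obtain ⟨t, rfl⟩ := exists_eq_smul_Ann_of_mem_nearestNeighborSpan hR hRrow
  exact ⟨t, _, hc.trans (add_comm _ _)⟩

/-- Each `Q^{j,α}` (`α ≥ 2`) is Hermitian with all row sums zero and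
annihilates the all-ones vector; and every purely imaginary Hermitian cyclic hopping matrix
with all row sums zero is a real multiple of `A_NN` plus a real combination of the
`Q^{j,α}` (hence the quotient by their span is at most one-dimensional, spanned by
`A_NN`). -/
theorem imaginary_hopping_decomposition (N : ℕ) [NeZero N] (hN : 2 ≤ N)
    (c : Matrix (Fin N) (Fin N) ℂ)
    (hherm : c.IsHermitian) (him : ∀ j k, (c j k).re = 0)
    (hrow : ∀ j, ∑ k, c j k = 0) :
    (∀ (j : Fin N) (α : ℕ), 2 ≤ α →
        (Qmat N j α).IsHermitian
          ∧ (∀ i, ∑ l, Qmat N j α i l = 0)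
          ∧ Qmat N j α *ᵥ (fun _ => (1 : ℂ)) = 0)
      ∧ ∃ (t : ℝ) (coef : Fin N → ℕ → ℝ),
          c = (t : ℂ) • Ann N
              + ∑ j : Fin N, ∑ α ∈ Finset.Icc 2 N, (coef j α : ℂ) • Qmat N j α :=
  imaginary_hopping_decomposition_general N c hherm him hrow
end
end
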